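/- Polar decomposition in Hilbert C*-modules: let A be a C*-algebra, E and F Hilbert A-modules, and T : E → F a continuous linear map with adjoint S : F → E. Assume the closure of T(E) is orthocomplemented in F (every y ∈ F can be written y = y₁ + y₂ with y₁ ∈ closure(T(E)) and ⟪T x, y₂⟫ = 0 for all x ∈ E) and the closure of S(F) is orthocomplemented in E (analogously). Let R : E → E be a continuous linear adjointable map which is self-adjoint (⟪R x, y⟫ = ⟪x, R y⟫ for all x, y), positive (0 ≤ ⟪x, R x⟫ in A for all x), and satisfies R ∘ R = S ∘ T (i.e. R = |T|). Then there exists a unique continuous linear adjointable u : E → F such that u vanishes on ker T and T = u ∘ R. Moreover u is a partial isometry: denoting its adjoint u*, one has u ∘ u* ∘ u = u, the range of u equals closure(T(E)), and the range of u* equals closure(S(F)). -/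

import Mathlib

open scoped RightActions

/-- The Hilbert C⋆-module class as it stood in Mathlib (December 2024): a *right* `A`-module
(`SMul Aᵐᵒᵖ E`) with an `A`-valued inner product with `⟪x, y <• a⟫ = ⟪x, y⟫ * a`.
Mathlib's `CStarModule` now denotes left modules, so the old notion is restated here. -/
class RightCStarModule (A : outParam <| Type*) (E : Type*) [NonUnitalSemiring A] [StarRing A]
    [Module ℂ A] [AddCommGroup E] [Module ℂ E] [PartialOrder A] [SMul Aᵐᵒᵖ E] [Norm A] [Norm E]
    extends Inner A E where
  inner_add_right {x} {y} {z} : inner x (y + z) = inner x y + inner x z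
  inner_self_nonneg {x} : 0 ≤ inner x x
  inner_self {x} : inner x x = 0 ↔ x = 0
  inner_op_smul_right {a : A} {x y : E} : inner x (y <• a) = inner x y * a
  inner_smul_right_complex {z : ℂ} {x} {y} : inner x (z • y) = z • inner x y
  star_inner x y : star (inner x y) = inner y x
  norm_eq_sqrt_norm_inner_self x : ‖x‖ = Real.sqrt ‖inner x x‖

variable {A : Type*} [CStarAlgebra A] [PartialOrder A] [StarOrderedRing A]
variable {E : Type*} [NormedAddCommGroup E] [NormedSpace ℂ E] [SMul Aᵐᵒᵖ E]
  [RightCStarModule A E] [CompleteSpace E]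
variable {F : Type*} [NormedAddCommGroup F] [NormedSpace ℂ F] [SMul Aᵐᵒᵖ F]
  [RightCStarModule A F] [CompleteSpace F]

local notation "⟪" x ", " y "⟫" => inner (𝕜 := A) x y

/-!
Self-adjointness of `R` and `R ∘ R = S ∘ T` give `⟪R x, R y⟫ = ⟪T x, T y⟫`, so `R x ↦ T x`
extends to an isometry `V` from `closure (range R)` onto `closure (range T)`, whose inverse `W`
extends `T x ↦ R x`. The orthocomplementation hypotheses give `closure (range R) = closure
(range S)` and continuous projections `P`, `Q` onto the two closures; `u = V P` is then a partial
isometry with adjoint `W Q`. It is unique because `T = u R` fixes it on `closure (range R)` and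
`u` must vanish on the complement, which is `ker T`.
-/

namespace ContinuousLinearMap

variable {𝕜 X Y Z : Type*} [NontriviallyNormedField 𝕜] [NormedAddCommGroup X] [NormedSpace 𝕜 X]
  [NormedAddCommGroup Y] [NormedSpace 𝕜 Y] [NormedAddCommGroup Z] [NormedSpace 𝕜 Z]

abbrev rangeClosure (f : X →L[𝕜] Y) : Submodule 𝕜 Y :=
  (LinearMap.range (f : X →ₗ[𝕜] Y)).topologicalClosure

lemma coe_rangeClosure (f : X →L[𝕜] Y) : (f.rangeClosure : Set Y) = closure (Set.range f) := by
  rw [Submodule.topologicalClosure_coe, LinearMap.coe_range, coe_coe]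

lemma apply_mem_rangeClosure (f : X →L[𝕜] Y) (x : X) : f x ∈ f.rangeClosure :=
  Submodule.le_topologicalClosure _ (LinearMap.mem_range_self (f : X →ₗ[𝕜] Y) x)

def toRangeClosure (f : X →L[𝕜] Y) : X →L[𝕜] f.rangeClosure :=
  f.codRestrict _ f.apply_mem_rangeClosure

@[simp]
lemma coe_toRangeClosure_apply (f : X →L[𝕜] Y) (x : X) : (f.toRangeClosure x : Y) = f x := rfl

lemma denseRange_toRangeClosure (f : X →L[𝕜] Y) : DenseRange f.toRangeClosure := by
  rw [DenseRange, Subtype.dense_iff, ← Set.range_comp]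
  exact (coe_rangeClosure f).le

/-- The continuous extension of `f x ↦ g x`; it is `0` unless `‖g x‖ ≤ C * ‖f x‖` for some `C`. -/
noncomputable def rangeTransfer [CompleteSpace Z] (f : X →L[𝕜] Y) (g : X →L[𝕜] Z) :
    f.rangeClosure →L[𝕜] g.rangeClosure :=
  (g.toRangeClosure : X →ₗ[𝕜] g.rangeClosure).extendOfNorm f.toRangeClosure

variable {f : X →L[𝕜] Y} {g : X →L[𝕜] Z}

lemma rangeTransfer_toRangeClosure [CompleteSpace Z] (h : ∃ C, ∀ x, ‖g x‖ ≤ C * ‖f x‖) (x : X) :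
    f.rangeTransfer g (f.toRangeClosure x) = g.toRangeClosure x :=
  LinearMap.extendOfNorm_eq f.denseRange_toRangeClosure (by simpa using h) x

lemma rangeTransfer_toRangeClosure_of_norm_eq [CompleteSpace Z] (h : ∀ x, ‖f x‖ = ‖g x‖)
    (x : X) : f.rangeTransfer g (f.toRangeClosure x) = g.toRangeClosure x :=
  rangeTransfer_toRangeClosure ⟨1, fun x => by rw [one_mul, h]⟩ x

lemma rangeTransfer_rangeTransfer [CompleteSpace Y] [CompleteSpace Z] (h : ∀ x, ‖f x‖ = ‖g x‖)
    (k : f.rangeClosure) : g.rangeTransfer f (f.rangeTransfer g k) = k := by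
  refine f.denseRange_toRangeClosure.induction_on k (isClosed_eq (by fun_prop) continuous_id)
    fun x => ?_
  rw [rangeTransfer_toRangeClosure_of_norm_eq h,
    rangeTransfer_toRangeClosure_of_norm_eq fun x => (h x).symm]

end ContinuousLinearMap

namespace RightCStarModule

open ContinuousLinearMap

section Module

variable {G : Type*} [NormedAddCommGroup G] [NormedSpace ℂ G] [SMul Aᵐᵒᵖ G]
  [RightCStarModule A G]

section Algebra

omit [StarOrderedRing A]

lemma inner_add_left {x y z : G} : ⟪x + y, z⟫ = ⟪x, z⟫ + ⟪y, z⟫ := by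
  rw [← star_inner z, inner_add_right, star_add, star_inner, star_inner]

lemma inner_zero_right {x : G} : ⟪x, 0⟫ = 0 :=
  left_eq_add.mp (by rw [← inner_add_right (y := 0), add_zero])

lemma inner_zero_left {x : G} : ⟪0, x⟫ = 0 := by
  rw [← star_inner, inner_zero_right, star_zero]

lemma inner_sub_right {x y z : G} : ⟪x, y - z⟫ = ⟪x, y⟫ - ⟪x, z⟫ :=
  eq_sub_of_add_eq (by rw [← inner_add_right, sub_add_cancel])

lemma inner_sub_left {x y z : G} : ⟪x - y, z⟫ = ⟪x, z⟫ - ⟪y, z⟫ := by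
  rw [← star_inner, inner_sub_right, star_sub, star_inner, star_inner]

lemma inner_smul_left_complex {c : ℂ} {x y : G} : ⟪c • x, y⟫ = star c • ⟪x, y⟫ := by
  rw [← star_inner y, inner_smul_right_complex, star_smul, star_inner]

lemma inner_op_smul_left {a : A} {x y : G} : ⟪x <• a, y⟫ = star a * ⟪x, y⟫ := by
  rw [← star_inner y, inner_op_smul_right, star_mul, star_inner]

lemma inner_smul_right_real {r : ℝ} {x y : G} : ⟪x, r • y⟫ = r • ⟪x, y⟫ := by
  rw [show r • y = (r : ℂ) • y by simp, inner_smul_right_complex]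
  simp

lemma inner_smul_left_real {r : ℝ} {x y : G} : ⟪r • x, y⟫ = r • ⟪x, y⟫ := by
  rw [← star_inner y, inner_smul_right_real, star_smul, star_trivial, star_inner]

lemma norm_sq_eq {x : G} : ‖x‖ ^ 2 = ‖⟪x, x⟫‖ := by
  rw [norm_eq_sqrt_norm_inner_self x, Real.sq_sqrt (norm_nonneg _)]

lemma ext_inner_left {x y : G} (h : ∀ z, ⟪z, x⟫ = ⟪z, y⟫) : x = y := by
  rw [← sub_eq_zero, ← inner_self, inner_sub_right, h, sub_self]

lemma norm_eq_of_inner_self_eq {H : Type*} [NormedAddCommGroup H] [NormedSpace ℂ H]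
    [SMul Aᵐᵒᵖ H] [RightCStarModule A H] {x : G} {y : H} (h : ⟪x, x⟫ = ⟪y, y⟫) : ‖x‖ = ‖y‖ := by
  rw [norm_eq_sqrt_norm_inner_self x, norm_eq_sqrt_norm_inner_self y, h]

def orth (K : Submodule ℂ G) : Submodule ℂ G where
  carrier := {n | ∀ m ∈ K, ⟪m, n⟫ = 0}
  add_mem' hx hy m hm := by rw [inner_add_right, hx m hm, hy m hm, add_zero]
  zero_mem' _ _ := inner_zero_right
  smul_mem' c _ hx m hm := by rw [inner_smul_right_complex, hx m hm, smul_zero]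

lemma mem_orth {K : Submodule ℂ G} {n : G} : n ∈ orth K ↔ ∀ m ∈ K, ⟪m, n⟫ = 0 := Iff.rfl

lemma inner_orth_left {K : Submodule ℂ G} {m n : G} (hm : m ∈ K) (hn : n ∈ orth K) :
    ⟪n, m⟫ = 0 := by
  rw [← star_inner, hn m hm, star_zero]

lemma disjoint_orth (K : Submodule ℂ G) : Disjoint K (orth K) :=
  Submodule.disjoint_def.mpr fun _ hx hx' => inner_self.mp (hx' _ hx)

variable {K : Submodule ℂ G}

lemma sub_projectionOntoL_mem_orth (hK : K.IsTopCompl (orth K)) (x : G) :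
    x - K.projectionOntoL (orth K) hK x ∈ orth K := by
  refine (Submodule.projectionOntoL_apply_eq_zero_iff hK).mp ?_
  rw [map_sub, Submodule.projectionOntoL_apply_left, sub_self]

lemma inner_projectionOntoL_right (hK : K.IsTopCompl (orth K)) {m : G} (hm : m ∈ K) (x : G) :
    ⟪m, (K.projectionOntoL (orth K) hK x : G)⟫ = ⟪m, x⟫ := by
  refine (sub_eq_zero.mp ?_).symm
  rw [← inner_sub_right]
  exact sub_projectionOntoL_mem_orth hK x m hm

lemma inner_projectionOntoL_left (hK : K.IsTopCompl (orth K)) {m : G} (hm : m ∈ K) (x : G) :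
    ⟪(K.projectionOntoL (orth K) hK x : G), m⟫ = ⟪x, m⟫ := by
  rw [← star_inner, inner_projectionOntoL_right hK hm, star_inner]

lemma orth_orth_le (hK : K.IsTopCompl (orth K)) : orth (orth K) ≤ K := by
  intro x hx
  set n := x - K.projectionOntoL (orth K) hK x
  have hn : n ∈ orth K := sub_projectionOntoL_mem_orth hK x
  have hn0 : n = 0 := by
    rw [← inner_self, inner_sub_right, hx n hn, inner_orth_left (Submodule.coe_mem _) hn, sub_zero]
  rw [sub_eq_zero.mp hn0]
  exact Submodule.coe_mem _

end Algebra

lemma inner_mul_inner_swap_le {x y : G} : ⟪y, x⟫ * ⟪x, y⟫ ≤ ‖x‖ ^ 2 • ⟪y, y⟫ := by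
  rcases eq_or_ne x 0 with rfl | hx
  · simp [inner_zero_left, inner_zero_right]
  set a := ⟪x, y⟫
  set c := ‖x‖ ^ 2
  rw [← star_inner x y]
  have h : 0 ≤ c • (star a * a) - c • (star a * a) - c • (star a * a) + c • c • ⟪y, y⟫ :=
    calc 0 ≤ ⟪x <• a - c • y, x <• a - c • y⟫ := inner_self_nonneg
      _ = star a * ⟪x, x⟫ * a - c • (star a * a) - c • (star a * a) + c • c • ⟪y, y⟫ := by
        simp only [inner_sub_right, inner_op_smul_right, inner_sub_left, inner_op_smul_left,
          inner_smul_left_real, inner_smul_right_real, star_inner x y, sub_mul, smul_mul_assoc,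
          smul_sub, mul_assoc, a]
        abel
      _ ≤ _ := by
        gcongr
        rw [show c = ‖⟪x, x⟫‖ from norm_sq_eq]
        exact CStarAlgebra.star_left_conjugate_le_norm_smul (hb := star_inner x x)
  rw [sub_self, zero_sub, neg_add_eq_sub, sub_nonneg] at h
  exact (smul_le_smul_iff_of_pos_left (by positivity)).mp h

variable (G) in
lemma norm_inner_le {x y : G} : ‖⟪x, y⟫‖ ≤ ‖x‖ * ‖y‖ := by
  have h : ‖⟪x, y⟫‖ ^ 2 ≤ (‖x‖ * ‖y‖) ^ 2 :=
    calc ‖⟪x, y⟫‖ ^ 2 = ‖⟪y, x⟫ * ⟪x, y⟫‖ := by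
          rw [← star_inner x, CStarRing.norm_star_mul_self, pow_two]
      _ ≤ ‖‖x‖ ^ 2 • ⟪y, y⟫‖ := by
          refine CStarAlgebra.norm_le_norm_of_nonneg_of_le ?_ inner_mul_inner_swap_le
          rw [← star_inner x]
          exact star_mul_self_nonneg _
      _ = (‖x‖ * ‖y‖) ^ 2 := by rw [norm_smul, ← norm_sq_eq]; simp [mul_pow]
  exact (pow_le_pow_iff_left₀ (norm_nonneg _) (by positivity) two_ne_zero).mp h

lemma continuous_inner : Continuous fun p : G × G => ⟪p.1, p.2⟫ := by
  let L : G →L⋆[ℂ] G →L[ℂ] A := LinearMap.mkContinuous₂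
    (LinearMap.mk₂'ₛₗ (starRingEnd ℂ) (RingHom.id ℂ) (fun x y : G => ⟪x, y⟫)
      (fun _ _ _ => inner_add_left) (fun _ _ _ => inner_smul_left_complex)
      (fun _ _ _ => inner_add_right) (fun _ _ _ => inner_smul_right_complex)) 1
    (fun x y => by simpa using norm_inner_le G (x := x) (y := y))
  exact (L.continuous.comp continuous_fst).clm_apply continuous_snd

lemma _root_.Continuous.rightCStarInner {X : Type*} [TopologicalSpace X] {f g : X → G}
    (hf : Continuous f) (hg : Continuous g) : Continuous fun t => ⟪f t, g t⟫ :=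
  continuous_inner.comp (hf.prodMk hg)

lemma isClosed_orth (K : Submodule ℂ G) : IsClosed (orth K : Set G) := by
  have : (orth K : Set G) = ⋂ m ∈ K, {n | ⟪m, n⟫ = 0} := by ext; simp [mem_orth]
  rw [this]
  exact isClosed_biInter fun _ _ =>
    isClosed_eq (continuous_const.rightCStarInner continuous_id) continuous_const

section

variable {X : Type*} [NormedAddCommGroup X] [NormedSpace ℂ X] {S : X →L[ℂ] G}

lemma mem_orth_rangeClosure_iff {n : G} : n ∈ orth S.rangeClosure ↔ ∀ y, ⟪S y, n⟫ = 0 := by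
  refine ⟨fun hn y => hn _ (S.apply_mem_rangeClosure y), fun hn m hm => ?_⟩
  rw [← SetLike.mem_coe, S.coe_rangeClosure] at hm
  refine closure_minimal ?_ (isClosed_eq (continuous_id.rightCStarInner continuous_const)
    continuous_const) hm
  rintro _ ⟨y, rfl⟩
  exact hn y

lemma isTopCompl_rangeClosure_orth [CompleteSpace G]
    (h : ∀ x : G, ∃ x₁ x₂, x = x₁ + x₂ ∧ x₁ ∈ closure (Set.range S) ∧ ∀ y, ⟪S y, x₂⟫ = 0) :
    S.rangeClosure.IsTopCompl (orth S.rangeClosure) := by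
  refine Submodule.isTopCompl_iff_isCompl_isClosed.mpr ⟨⟨disjoint_orth _, ?_⟩,
    Submodule.isClosed_topologicalClosure _, isClosed_orth _⟩
  refine Submodule.codisjoint_iff_exists_add_eq.mpr fun x => ?_
  obtain ⟨x₁, x₂, rfl, hx₁, hx₂⟩ := h x
  exact ⟨x₁, x₂, by rwa [← SetLike.mem_coe, S.coe_rangeClosure], mem_orth_rangeClosure_iff.mpr hx₂,
    rfl⟩

end

end Module

section PartialIsometry

variable {X : Type*} [NormedAddCommGroup X] [NormedSpace ℂ X]
  {G : Type*} [NormedAddCommGroup G] [NormedSpace ℂ G] [SMul Aᵐᵒᵖ G] [RightCStarModule A G]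
  {H : Type*} [NormedAddCommGroup H] [NormedSpace ℂ H] [CompleteSpace H]
  {R : X →L[ℂ] G} {T : X →L[ℂ] H}

section Algebra

omit [StarOrderedRing A]

variable (R T) in
/-- The partial isometry with initial space `closure (range R)` and final space
`closure (range T)`, sending `R x` to `T x` when `‖R x‖ = ‖T x‖`. -/
noncomputable def partialIsometry (hR : R.rangeClosure.IsTopCompl (orth R.rangeClosure)) :
    G →L[ℂ] H :=
  T.rangeClosure.subtypeL ∘L R.rangeTransfer T ∘L R.rangeClosure.projectionOntoL _ hR

variable (hR : R.rangeClosure.IsTopCompl (orth R.rangeClosure))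

lemma partialIsometry_apply (g : G) :
    partialIsometry R T hR g = R.rangeTransfer T (R.rangeClosure.projectionOntoL _ hR g) := rfl

lemma partialIsometry_apply_apply (hnorm : ∀ x, ‖R x‖ = ‖T x‖) (x : X) :
    partialIsometry R T hR (R x) = T x := by
  rw [partialIsometry_apply, ← R.coe_toRangeClosure_apply, Submodule.projectionOntoL_apply_left,
    rangeTransfer_toRangeClosure_of_norm_eq hnorm, T.coe_toRangeClosure_apply]

lemma partialIsometry_apply_of_mem_orth {n : G} (hn : n ∈ orth R.rangeClosure) :
    partialIsometry R T hR n = 0 := by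
  rw [partialIsometry_apply, (Submodule.projectionOntoL_apply_eq_zero_iff hR).mpr hn, map_zero,
    Submodule.coe_zero]

lemma eq_partialIsometry (hnorm : ∀ x, ‖R x‖ = ‖T x‖) (u : G →L[ℂ] H)
    (hu : ∀ x, u (R x) = T x) (hu_orth : ∀ n ∈ orth R.rangeClosure, u n = 0) :
    u = partialIsometry R T hR := by
  have h_range : ∀ k : R.rangeClosure, u k = partialIsometry R T hR k := fun k =>
    R.denseRange_toRangeClosure.induction_on k (isClosed_eq (by fun_prop) (by fun_prop))
      fun x => by rw [R.coe_toRangeClosure_apply, hu, partialIsometry_apply_apply hR hnorm]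
  ext g
  have hg := sub_projectionOntoL_mem_orth hR g
  rw [← add_sub_cancel (R.rangeClosure.projectionOntoL _ hR g : G) g, map_add, map_add, h_range,
    hu_orth _ hg, partialIsometry_apply_of_mem_orth hR hg]

variable [CompleteSpace G]

lemma range_partialIsometry (hnorm : ∀ x, ‖R x‖ = ‖T x‖) :
    Set.range (partialIsometry R T hR) = closure (Set.range T) := by
  rw [← T.coe_rangeClosure]
  refine subset_antisymm (Set.range_subset_iff.mpr fun g => Submodule.coe_mem _) fun l hl => ?_
  refine ⟨T.rangeTransfer R ⟨l, hl⟩, ?_⟩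
  rw [partialIsometry_apply, Submodule.projectionOntoL_apply_left,
    rangeTransfer_rangeTransfer fun x => (hnorm x).symm]

variable [SMul Aᵐᵒᵖ H] [RightCStarModule A H]
  (hT : T.rangeClosure.IsTopCompl (orth T.rangeClosure))

lemma partialIsometry_partialIsometry (hnorm : ∀ x, ‖R x‖ = ‖T x‖) (g : G) :
    partialIsometry T R hT (partialIsometry R T hR g) = R.rangeClosure.projectionOntoL _ hR g := by
  rw [partialIsometry_apply hT, partialIsometry_apply hR, Submodule.projectionOntoL_apply_left,
    rangeTransfer_rangeTransfer hnorm]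

lemma partialIsometry_partialIsometry_partialIsometry (hnorm : ∀ x, ‖R x‖ = ‖T x‖) (g : G) :
    partialIsometry R T hR (partialIsometry T R hT (partialIsometry R T hR g)) =
      partialIsometry R T hR g := by
  rw [partialIsometry_partialIsometry hR hT hnorm, partialIsometry_apply hR,
    Submodule.projectionOntoL_apply_left, partialIsometry_apply hR]

end Algebra

variable [CompleteSpace G] [SMul Aᵐᵒᵖ H] [RightCStarModule A H]

lemma inner_rangeTransfer (hRT : ∀ x y, ⟪R x, R y⟫ = ⟪T x, T y⟫) (k : R.rangeClosure)
    (l : T.rangeClosure) :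
    ⟪(R.rangeTransfer T k : H), (l : H)⟫ = ⟪(k : G), (T.rangeTransfer R l : G)⟫ := by
  have hnorm x : ‖R x‖ = ‖T x‖ := norm_eq_of_inner_self_eq (hRT x x)
  refine R.denseRange_toRangeClosure.induction_on k (isClosed_eq ?_ ?_) fun x => ?_
  · exact (continuous_subtype_val.comp (map_continuous _)).rightCStarInner continuous_const
  · exact continuous_subtype_val.rightCStarInner continuous_const
  refine T.denseRange_toRangeClosure.induction_on l (isClosed_eq ?_ ?_) fun y => ?_
  · exact continuous_const.rightCStarInner continuous_subtype_val
  · exact continuous_const.rightCStarInner (continuous_subtype_val.comp (map_continuous _))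
  rw [rangeTransfer_toRangeClosure_of_norm_eq hnorm,
    rangeTransfer_toRangeClosure_of_norm_eq fun x => (hnorm x).symm]
  exact (hRT x y).symm

lemma inner_partialIsometry (hR : R.rangeClosure.IsTopCompl (orth R.rangeClosure))
    (hT : T.rangeClosure.IsTopCompl (orth T.rangeClosure))
    (hRT : ∀ x y, ⟪R x, R y⟫ = ⟪T x, T y⟫) (g : G) (h : H) :
    ⟪partialIsometry R T hR g, h⟫ = ⟪g, partialIsometry T R hT h⟫ := by
  rw [partialIsometry_apply, partialIsometry_apply,
    ← inner_projectionOntoL_right hT (Submodule.coe_mem _), inner_rangeTransfer hRT,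
    inner_projectionOntoL_left hR (Submodule.coe_mem _)]

end PartialIsometry

section Adjoint

variable {X : Type*} [NormedAddCommGroup X] [NormedSpace ℂ X] [SMul Aᵐᵒᵖ X] [RightCStarModule A X]
  {Y : Type*} [NormedAddCommGroup Y] [NormedSpace ℂ Y] [SMul Aᵐᵒᵖ Y] [RightCStarModule A Y]
  {T : X →L[ℂ] Y} {S : Y →L[ℂ] X} {R : X →L[ℂ] X}

section Algebra

omit [StarOrderedRing A]

lemma inner_apply_apply_eq_of_comp_self_eq (hS : ∀ x y, ⟪T x, y⟫ = ⟪x, S y⟫)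
    (hRsa : ∀ x y, ⟪R x, y⟫ = ⟪x, R y⟫) (hRR : R.comp R = S.comp T) (x y : X) :
    ⟪R x, R y⟫ = ⟪T x, T y⟫ := by
  rw [hRsa, hS, ← comp_apply, hRR, comp_apply]

lemma apply_eq_zero_iff_forall_inner_eq_zero (hS : ∀ x y, ⟪T x, y⟫ = ⟪x, S y⟫) {x : X} :
    T x = 0 ↔ ∀ y, ⟪S y, x⟫ = 0 := by
  refine ⟨fun hx y => ?_, fun hx => inner_self.mp ?_⟩
  · rw [← star_inner, ← hS, hx, inner_zero_left, star_zero]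
  · rw [hS, ← star_inner, hx, star_zero]

end Algebra

lemma rangeClosure_adjoint_eq [CompleteSpace X] (hS : ∀ x y, ⟪T x, y⟫ = ⟪x, S y⟫)
    (hRsa : ∀ x y, ⟪R x, y⟫ = ⟪x, R y⟫) (hRR : R.comp R = S.comp T)
    (hTorth : ∀ y : Y, ∃ y₁ y₂ : Y, y = y₁ + y₂ ∧ y₁ ∈ closure (Set.range T) ∧
      ∀ x : X, ⟪T x, y₂⟫ = 0)
    (hSorth : ∀ x : X, ∃ x₁ x₂ : X, x = x₁ + x₂ ∧ x₁ ∈ closure (Set.range S) ∧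
      ∀ y : Y, ⟪S y, x₂⟫ = 0) :
    S.rangeClosure = R.rangeClosure := by
  have hRT := inner_apply_apply_eq_of_comp_self_eq hS hRsa hRR
  refine le_antisymm
    (Submodule.topologicalClosure_minimal _ ?_ (Submodule.isClosed_topologicalClosure _))
    (Submodule.topologicalClosure_minimal _ ?_ (Submodule.isClosed_topologicalClosure _))
  · rintro _ ⟨y, rfl⟩
    obtain ⟨y₁, y₂, rfl, hy₁, hy₂⟩ := hTorth y
    have hSy₂ : S y₂ = 0 := inner_self.mp (by rw [← hS, hy₂])
    have hSTR : Set.MapsTo S (Set.range T) (Set.range R) := by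
      rintro _ ⟨x, rfl⟩
      exact ⟨R x, by rw [← comp_apply, hRR, comp_apply]⟩
    simp only [coe_coe, map_add, hSy₂, add_zero]
    rw [← SetLike.mem_coe, R.coe_rangeClosure]
    exact map_mem_closure S.continuous hy₁ hSTR
  · rintro _ ⟨z, rfl⟩
    refine orth_orth_le (isTopCompl_rangeClosure_orth hSorth) fun n hn => ?_
    have hTn : T n = 0 :=
      (apply_eq_zero_iff_forall_inner_eq_zero hS).mpr (mem_orth_rangeClosure_iff.mp hn)
    have hRn : R n = 0 := by
      rw [← norm_eq_zero, norm_eq_of_inner_self_eq (hRT n n), hTn, norm_zero]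
    rw [coe_coe, ← hRsa, hRn, inner_zero_left]

end Adjoint

end RightCStarModule

open RightCStarModule ContinuousLinearMap in
theorem polar_decomposition_general (T : E →L[ℂ] F) (S : F →L[ℂ] E)
    (hS : ∀ (x : E) (y : F), ⟪T x, y⟫ = ⟪x, S y⟫)
    (hTorth : ∀ y : F, ∃ y₁ y₂ : F, y = y₁ + y₂ ∧ y₁ ∈ closure (Set.range T) ∧
      ∀ x : E, ⟪T x, y₂⟫ = 0)
    (hSorth : ∀ x : E, ∃ x₁ x₂ : E, x = x₁ + x₂ ∧ x₁ ∈ closure (Set.range S) ∧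
      ∀ y : F, ⟪S y, x₂⟫ = 0)
    (R : E →L[ℂ] E)
    (hRsa : ∀ x y : E, ⟪R x, y⟫ = ⟪x, R y⟫)
    (hRR : R.comp R = S.comp T) :
    (∃! u : E →L[ℂ] F,
      (∃ w : F →L[ℂ] E, ∀ (x : E) (y : F), ⟪u x, y⟫ = ⟪x, w y⟫) ∧
      (∀ x : E, T x = 0 → u x = 0) ∧ T = u.comp R) ∧
    (∀ u : E →L[ℂ] F, (∀ x : E, T x = 0 → u x = 0) → T = u.comp R →
      ∀ w : F →L[ℂ] E, (∀ (x : E) (y : F), ⟪u x, y⟫ = ⟪x, w y⟫) →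
        (∀ x : E, u (w (u x)) = u x) ∧
        Set.range u = closure (Set.range T) ∧
        Set.range w = closure (Set.range S)) := by
  have hRT := inner_apply_apply_eq_of_comp_self_eq hS hRsa hRR
  have hnorm x : ‖R x‖ = ‖T x‖ := norm_eq_of_inner_self_eq (hRT x x)
  have hSR := rangeClosure_adjoint_eq hS hRsa hRR hTorth hSorth
  have hR : R.rangeClosure.IsTopCompl (orth R.rangeClosure) :=
    hSR ▸ isTopCompl_rangeClosure_orth hSorth
  have hT := isTopCompl_rangeClosure_orth hTorth
  have hker x : T x = 0 ↔ x ∈ orth R.rangeClosure := by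
    rw [← hSR, mem_orth_rangeClosure_iff, apply_eq_zero_iff_forall_inner_eq_zero hS]
  have h_unique (u : E →L[ℂ] F) (hu : ∀ x, T x = 0 → u x = 0) (hTu : T = u.comp R) :
      u = partialIsometry R T hR :=
    eq_partialIsometry hR hnorm u (fun x => by rw [hTu, comp_apply])
      fun n hn => hu n ((hker n).mpr hn)
  refine ⟨⟨partialIsometry R T hR, ⟨⟨partialIsometry T R hT, inner_partialIsometry hR hT hRT⟩,
    fun x hx => partialIsometry_apply_of_mem_orth hR ((hker x).mp hx),
    ext fun x => (partialIsometry_apply_apply hR hnorm x).symm⟩,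
    fun u ⟨_, hu, hTu⟩ => h_unique u hu hTu⟩, fun u hu hTu w hw => ?_⟩
  obtain rfl := h_unique u hu hTu
  obtain rfl : w = partialIsometry T R hT :=
    ext fun y => ext_inner_left fun x => by rw [← hw, inner_partialIsometry hR hT hRT]
  refine ⟨partialIsometry_partialIsometry_partialIsometry hR hT hnorm,
    range_partialIsometry hR hnorm, ?_⟩
  rw [range_partialIsometry hT fun x => (hnorm x).symm, ← R.coe_rangeClosure, ← hSR,
    S.coe_rangeClosure]

/-- Polar decomposition of an adjointable operator between Hilbert C*-modules whose range
and adjoint range have orthocomplemented closures. -/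
theorem polar_decomposition (T : E →L[ℂ] F) (S : F →L[ℂ] E)
    (hS : ∀ (x : E) (y : F), ⟪T x, y⟫ = ⟪x, S y⟫)
    (hTorth : ∀ y : F, ∃ y₁ y₂ : F, y = y₁ + y₂ ∧ y₁ ∈ closure (Set.range T) ∧
      ∀ x : E, ⟪T x, y₂⟫ = 0)
    (hSorth : ∀ x : E, ∃ x₁ x₂ : E, x = x₁ + x₂ ∧ x₁ ∈ closure (Set.range S) ∧
      ∀ y : F, ⟪S y, x₂⟫ = 0)
    (R : E →L[ℂ] E)
    (hRsa : ∀ x y : E, ⟪R x, y⟫ = ⟪x, R y⟫)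
    (hRpos : ∀ x : E, 0 ≤ ⟪x, R x⟫)
    (hRR : R.comp R = S.comp T) :
    (∃! u : E →L[ℂ] F,
      (∃ w : F →L[ℂ] E, ∀ (x : E) (y : F), ⟪u x, y⟫ = ⟪x, w y⟫) ∧
      (∀ x : E, T x = 0 → u x = 0) ∧ T = u.comp R) ∧
    (∀ u : E →L[ℂ] F, (∀ x : E, T x = 0 → u x = 0) → T = u.comp R →
      ∀ w : F →L[ℂ] E, (∀ (x : E) (y : F), ⟪u x, y⟫ = ⟪x, w y⟫) →
        (∀ x : E, u (w (u x)) = u x) ∧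
        Set.range u = closure (Set.range T) ∧
        Set.range w = closure (Set.range S)) :=
  polar_decomposition_general T S hS hTorth hSorth R hRsa hRR
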